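/- arXiv:1004.2575 — 2 statements merged into one kernel-verified Lean document; each statement's English description precedes it below -/
import Mathlib

section
/- Let z = (r,d) in Z^2 with r > 0 and gcd(r,d) = 1, and let x in Z^2 with 0 < x_1 < r lie strictly above the line through 0 and z. If gcd(x_1,x_2) ≥ 2 and gcd(z_1-x_1,z_2-x_2) ≥ 3, or gcd(x_1,x_2) ≥ 3 and gcd(z_1-x_1,z_2-x_2) ≥ 2, then the triangle with vertices (0,0), x, z contains a lattice point in its interior. -/
/-- `det(a,b) = a₁b₂ - a₂b₁`. -/
def detZ (a b : ℤ × ℤ) : ℤ := a.1 * b.2 - a.2 * b.1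

/-- Embedding of `ℤ²` into `ℝ²`. -/
def toR (p : ℤ × ℤ) : ℝ × ℝ := ((p.1 : ℝ), (p.2 : ℝ))

/-!
Write `x = A • u` and `z - x = B • v` with `A = deg x` and `B = deg (z - x)`. Then
`det(z, x) = A B det(v, u)`, so `det(v, u) > 0`, and in the basis `u, v` the open triangle is
`{s u + t v | 0 < t / B < s / A < 1}`. The lattice point `x - u + v = (A - 1) u + v` lies in it
exactly when `A + B < A B`, which is what the degree hypotheses guarantee.
-/

lemma smul_add_smul_mem_convexHull_zero {𝕜 E : Type*} [Field 𝕜] [LinearOrder 𝕜]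
    [IsStrictOrderedRing 𝕜] [AddCommGroup E] [Module 𝕜 E] {a b : E} {β γ : 𝕜}
    (hβ : 0 ≤ β) (hγ : 0 ≤ γ) (hβγ : β + γ ≤ 1) :
    β • a + γ • b ∈ convexHull 𝕜 {0, a, b} := by
  have h := (convex_convexHull 𝕜 ({0, a, b} : Set E)).sum_mem (t := Finset.univ)
    (w := ![1 - β - γ, β, γ]) (z := ![0, a, b])
    (by
      intro i _
      fin_cases i <;>
        simp only [Fin.zero_eta, Fin.mk_one, Fin.reduceFinMk, Fin.isValue, Matrix.cons_val] <;>
        linarith)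
    (by simp only [Fin.sum_univ_three, Fin.isValue, Matrix.cons_val]; ring)
    (by intro i _; fin_cases i <;> apply subset_convexHull <;> simp)
  simpa [Fin.sum_univ_three] using h

def detR (a b : ℝ × ℝ) : ℝ := a.1 * b.2 - a.2 * b.1

@[simp] lemma detR_toR (a b : ℤ × ℤ) : detR (toR a) (toR b) = detZ a b := by
  simp [detR, toR, detZ]

lemma detR_smul_eq_add (a b q : ℝ × ℝ) : detR a b • q = detR q b • a + detR a q • b := by
  ext <;> simp only [detR, Prod.smul_fst, Prod.smul_snd, Prod.fst_add, Prod.snd_add,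
    smul_eq_mul] <;> ring

lemma mem_convexHull_zero_of_detR {a b q : ℝ × ℝ} (hab : 0 < detR a b) (hqb : 0 ≤ detR q b)
    (haq : 0 ≤ detR a q) (hsum : detR q b + detR a q ≤ detR a b) :
    q ∈ convexHull ℝ {0, a, b} := by
  have hq : q = (detR q b / detR a b) • a + (detR a q / detR a b) • b := by
    rw [div_eq_inv_mul, div_eq_inv_mul, mul_smul, mul_smul, ← smul_add, ← detR_smul_eq_add,
      inv_smul_smul₀ hab.ne']
  rw [hq]
  refine smul_add_smul_mem_convexHull_zero (by positivity) (by positivity) ?_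
  rwa [← add_div, div_le_one hab]

lemma mem_interior_convexHull_zero_of_detR {a b q : ℝ × ℝ} (hqb : 0 < detR q b)
    (haq : 0 < detR a q) (hsum : detR q b + detR a q < detR a b) :
    q ∈ interior (convexHull ℝ {0, a, b}) := by
  let openTriangle : Set (ℝ × ℝ) :=
    {p | 0 < detR p b} ∩ {p | 0 < detR a p} ∩ {p | detR p b + detR a p < detR a b}
  have hopen : IsOpen openTriangle := by
    refine ((isOpen_lt ?_ ?_).inter (isOpen_lt ?_ ?_)).inter (isOpen_lt ?_ ?_) <;>
      (try unfold detR) <;> fun_prop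
  refine interior_maximal ?_ hopen ⟨⟨hqb, haq⟩, hsum⟩
  rintro p ⟨⟨hpb, hap⟩, hp⟩
  exact mem_convexHull_zero_of_detR (by linarith) hpb.le hap.le hp.le

lemma exists_eq_gcd_smul (w : ℤ × ℤ) : ∃ u : ℤ × ℤ, w = Int.gcd w.1 w.2 • u := by
  obtain ⟨u₁, hu₁⟩ := Int.gcd_dvd_left w.1 w.2
  obtain ⟨u₂, hu₂⟩ := Int.gcd_dvd_right w.1 w.2
  exact ⟨(u₁, u₂), Prod.ext (by simpa using hu₁) (by simpa using hu₂)⟩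

lemma detZ_sub_add_inside_of_add_lt_mul {x z u v : ℤ × ℤ} {A B : ℕ} (hu : x = A • u)
    (hv : z - x = B • v) (hAB : A + B < A * B) (habove : 0 < detZ z x) :
    0 < detZ z (x - u + v) ∧ 0 < detZ (x - u + v) x ∧
      detZ (x - u + v) x + detZ z (x - u + v) < detZ z x := by
  obtain rfl : z = A • u + B • v := by rw [← hv, hu]; abel
  subst hu
  have hA : (0 : ℤ) < A := by exact_mod_cast Nat.pos_of_ne_zero (by rintro rfl; simp at hAB)
  have hB : (0 : ℤ) < B := by exact_mod_cast Nat.pos_of_ne_zero (by rintro rfl; simp at hAB)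
  have hAB' : (A : ℤ) + B < A * B := by exact_mod_cast hAB
  set E := detZ v u
  obtain ⟨hzx, hzp, hpx⟩ : detZ (A • u + B • v) (A • u) = A * B * E ∧
      detZ (A • u + B • v) (A • u - u + v) = E * (A * B - A - B) ∧
      detZ (A • u - u + v) (A • u) = A * E := by
    refine ⟨?_, ?_, ?_⟩ <;>
      simp only [detZ, E, Prod.fst_add, Prod.snd_add, Prod.fst_sub, Prod.snd_sub, Prod.smul_fst,
        Prod.smul_snd] <;>
      simp only [nsmul_eq_mul] <;> ring
  have hE : 0 < E := pos_of_mul_pos_right (hzx ▸ habove) (by positivity)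
  rw [hzx, hzp, hpx]
  exact ⟨by nlinarith, by positivity, by nlinarith⟩

theorem interior_point_of_degrees_general (z x : ℤ × ℤ)
    (habove : 0 < detZ z x)
    (hdeg : (2 ≤ Int.gcd x.1 x.2 ∧ 3 ≤ Int.gcd (z.1 - x.1) (z.2 - x.2)) ∨
            (3 ≤ Int.gcd x.1 x.2 ∧ 2 ≤ Int.gcd (z.1 - x.1) (z.2 - x.2))) :
    ∃ p : ℤ × ℤ, toR p ∈ interior (convexHull ℝ {(0 : ℝ × ℝ), toR x, toR z}) := by
  obtain ⟨u, hu⟩ := exists_eq_gcd_smul x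
  obtain ⟨v, hv⟩ := exists_eq_gcd_smul (z - x)
  have hAB : Int.gcd x.1 x.2 + Int.gcd (z.1 - x.1) (z.2 - x.2) <
      Int.gcd x.1 x.2 * Int.gcd (z.1 - x.1) (z.2 - x.2) := by
    rcases hdeg with ⟨hA, hB⟩ | ⟨hA, hB⟩ <;> nlinarith
  obtain ⟨hzp, hpx, hsum⟩ := detZ_sub_add_inside_of_add_lt_mul hu hv hAB habove
  refine ⟨x - u + v, ?_⟩
  rw [Set.pair_comm]
  refine mem_interior_convexHull_zero_of_detR ?_ ?_ ?_ <;> simp only [detR_toR]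
  exacts [mod_cast hpx, mod_cast hzp, mod_cast hsum]

/-- Let `z = (r,d)` with `r > 0` and `gcd(r,d) = 1`, and let `x` with `0 < x₁ < r`
lie strictly above the line through `0` and `z` (i.e. `detZ z x > 0`).  If
`deg(x) ≥ 2` and `deg(z-x) ≥ 3`, or `deg(x) ≥ 3` and `deg(z-x) ≥ 2`, then the
triangle with vertices `(0,0)`, `x`, `z` contains a lattice point in its interior. -/
theorem interior_point_of_degrees (z x : ℤ × ℤ) (hz : 0 < z.1)
    (hgcd : Int.gcd z.1 z.2 = 1) (hx1 : 0 < x.1) (hx2 : x.1 < z.1)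
    (habove : 0 < detZ z x)
    (hdeg : (2 ≤ Int.gcd x.1 x.2 ∧ 3 ≤ Int.gcd (z.1 - x.1) (z.2 - x.2)) ∨
            (3 ≤ Int.gcd x.1 x.2 ∧ 2 ≤ Int.gcd (z.1 - x.1) (z.2 - x.2))) :
    ∃ p : ℤ × ℤ, toR p ∈ interior (convexHull ℝ {(0 : ℝ × ℝ), toR x, toR z}) :=
  interior_point_of_degrees_general z x habove hdeg
end

section
/- Any path p of nonzero lattice vectors in the half-plane {(a,b): a > 0 or (a = 0 and b > 0)} can be transformed into a convex path (nondecreasing slopes) by finitely many local convexifications. -/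
/-- Membership in the half-plane `{(a,b) : a > 0, or a = 0 and b > 0}`. -/
def inH (x : ℤ × ℤ) : Prop := 0 < x.1 ∨ (x.1 = 0 ∧ 0 < x.2)

/-- A path (list of lattice vectors) is convex if its slopes are nondecreasing, i.e.
`detZ a b ≥ 0` for adjacent entries. -/
def ConvexPath (l : List (ℤ × ℤ)) : Prop := l.Chain' (fun a b => 0 ≤ detZ a b)

/-- One local convexification step: an adjacent nonconvex pair `(a,b)` (with
`μ(a) > μ(b)`, i.e. `detZ a b < 0`) is replaced by a convex path `q` of total weight
`a + b` lying in the triangle with sides `b`, `a` (every segment of `q` has slope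
between `μ(b)` and `μ(a)` and lies in the half-plane). -/
def ConvStep (p p' : List (ℤ × ℤ)) : Prop :=
  ∃ (l₁ : List (ℤ × ℤ)) (a b : ℤ × ℤ) (q l₂ : List (ℤ × ℤ)),
    p = l₁ ++ a :: b :: l₂ ∧ detZ a b < 0 ∧ p' = l₁ ++ q ++ l₂ ∧
    q.sum = a + b ∧ ConvexPath q ∧
    ∀ y ∈ q, inH y ∧ 0 ≤ detZ b y ∧ 0 ≤ detZ y a

lemma detZ_swap (a b : ℤ × ℤ) : detZ b a = -detZ a b := by
  simp only [detZ]; ring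

lemma detZ_self (a : ℤ × ℤ) : detZ a a = 0 := by
  simp only [detZ]; ring

theorem Relation.exists_reflTransGen_of_measure_lt {α : Type*} {r : α → α → Prop}
    {P Q : α → Prop} (f : α → ℕ)
    (step : ∀ x, P x → ¬Q x → ∃ y, r x y ∧ P y ∧ f y < f x) :
    ∀ x, P x → ∃ y, Relation.ReflTransGen r x y ∧ Q y := by
  intro x
  induction hx : f x using Nat.strong_induction_on generalizing x with
  | _ n ih =>
    intro hP
    by_cases hQ : Q x
    · exact ⟨x, .refl, hQ⟩
    · obtain ⟨y, hxy, hPy, hlt⟩ := step x hP hQ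
      obtain ⟨z, hyz, hQz⟩ := ih (f y) (hx ▸ hlt) y rfl hPy
      exact ⟨z, .head hxy hyz, hQz⟩

def inversionArea : List (ℤ × ℤ) → ℕ
  | [] => 0
  | a :: l => (l.map fun b => (detZ b a).toNat).sum + inversionArea l

lemma inversionArea_swap_lt (l₁ : List (ℤ × ℤ)) {a b : ℤ × ℤ} (l₂ : List (ℤ × ℤ))
    (h : detZ a b < 0) :
    inversionArea (l₁ ++ b :: a :: l₂) < inversionArea (l₁ ++ a :: b :: l₂) := by
  induction l₁ with
  | nil =>
    have hab : (detZ a b).toNat = 0 := Int.toNat_of_nonpos h.le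
    have hba : 0 < (detZ b a).toNat := by rw [detZ_swap]; omega
    simp only [List.nil_append, inversionArea, List.map_cons, List.sum_cons]
    omega
  | cons c l₁ ih =>
    have hperm : (l₁ ++ b :: a :: l₂).Perm (l₁ ++ a :: b :: l₂) :=
      (List.Perm.swap a b l₂).append_left l₁
    simp only [List.cons_append, inversionArea]
    rw [(hperm.map fun x => (detZ x c).toNat).sum_eq]
    exact Nat.add_lt_add_left ih _

lemma exists_detZ_neg_of_not_convexPath {p : List (ℤ × ℤ)} (h : ¬ConvexPath p) :
    ∃ l₁ a b l₂, p = l₁ ++ a :: b :: l₂ ∧ detZ a b < 0 := by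
  induction p with
  | nil => exact absurd List.isChain_nil h
  | cons a l ih =>
    cases l with
    | nil => exact absurd (List.isChain_singleton a) h
    | cons b l =>
      by_cases hab : detZ a b < 0
      · exact ⟨[], a, b, l, rfl, hab⟩
      · have hbl : ¬ConvexPath (b :: l) := fun hc =>
          h (List.isChain_cons_cons.mpr ⟨not_lt.mp hab, hc⟩)
        obtain ⟨l₁, x, y, l₂, hbl, hxy⟩ := ih hbl
        exact ⟨a :: l₁, x, y, l₂, by rw [hbl]; rfl, hxy⟩

lemma convStep_swap (l₁ : List (ℤ × ℤ)) {a b : ℤ × ℤ} (l₂ : List (ℤ × ℤ))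
    (h : detZ a b < 0) (ha : inH a) (hb : inH b) :
    ConvStep (l₁ ++ a :: b :: l₂) (l₁ ++ b :: a :: l₂) := by
  have hba : 0 ≤ detZ b a := by rw [detZ_swap]; omega
  refine ⟨l₁, a, b, [b, a], l₂, rfl, h, by simp, by simp [add_comm],
    List.isChain_pair.mpr hba, ?_⟩
  simp only [List.mem_cons, List.not_mem_nil, or_false]
  rintro y (rfl | rfl)
  · exact ⟨hb, (detZ_self y).ge, hba⟩
  · exact ⟨ha, hba, (detZ_self y).ge⟩

/-- Any path of lattice vectors in the half-plane
`{(a,b) : a > 0 or (a = 0 and b > 0)}` can be transformed into a convex path by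
finitely many local convexifications. -/
theorem convexify (p : List (ℤ × ℤ)) (hH : ∀ x ∈ p, inH x) :
    ∃ p', Relation.ReflTransGen ConvStep p p' ∧ ConvexPath p' := by
  refine Relation.exists_reflTransGen_of_measure_lt (P := fun p => ∀ x ∈ p, inH x)
    inversionArea ?_ p hH
  intro p hH hp
  obtain ⟨l₁, a, b, l₂, rfl, hab⟩ := exists_detZ_neg_of_not_convexPath hp
  have hperm : (l₁ ++ b :: a :: l₂).Perm (l₁ ++ a :: b :: l₂) :=
    (List.Perm.swap a b l₂).append_left l₁
  refine ⟨_, convStep_swap l₁ l₂ hab (hH a (by simp)) (hH b (by simp)),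
    fun x hx => hH x (hperm.mem_iff.mp hx), inversionArea_swap_lt l₁ l₂ hab⟩
end
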